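/- arXiv:2101.03146 — 5 statements merged into one kernel-verified Lean document; each statement's English description precedes it below -/
import Mathlib

section
/- Let S be a perfect F_p-algebra (the Frobenius x ↦ x^p is bijective) and I a finitely generated ideal of S. Then the tilt (S/I)^♭ := lim_{x↦x^p} S/I is naturally isomorphic as a ring to the I-adic completion of S. -/
/-!
Because `S` is perfect, `x ↦ x ^ p ^ n` identifies `S ⧸ I` with `S ⧸ I^[p^n]`, where the Frobenius
power `I^[p^n]` is generated by the `p^n`-th powers of elements of `I`. Under these identifications
the tilt becomes `lim_n S ⧸ I^[p^n]` with the projections as transition maps. Now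
`I^[p^n] ⊆ I ^ n`, and conversely every element of `I` has a power in `I^[p^n]`, so for finitely
generated `I` some `I ^ k ⊆ I^[p^n]`. The two systems of ideals are thus cofinal and have the same
inverse limit.
-/

open Ideal.Quotient

namespace Ideal

variable {R : Type*} [CommRing R] (p : ℕ) [ExpChar R p] (I : Ideal R)

def frobeniusPow (n : ℕ) : Ideal R := I.map (iterateFrobenius R p n)

theorem frobeniusPow_add_le (n j : ℕ) : I.frobeniusPow p (n + j) ≤ I.frobeniusPow p n := by
  rw [frobeniusPow, map_le_iff_le_comap]
  intro x hx
  rw [mem_comap, iterateFrobenius_def, pow_add, pow_mul']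
  exact mem_map_of_mem _ (I.pow_mem_of_mem hx _ (pow_pos (expChar_pos R p) j))

theorem frobeniusPow_le_pow (hp : 1 < p) (n : ℕ) : I.frobeniusPow p n ≤ I ^ n := by
  rw [frobeniusPow, map_le_iff_le_comap]
  exact fun _ hx => pow_le_pow_right (Nat.lt_pow_self hp).le (pow_mem_pow hx _)

theorem exists_pow_le_frobeniusPow (hI : I.FG) (n : ℕ) : ∃ k, I ^ k ≤ I.frobeniusPow p n :=
  exists_pow_le_of_le_radical_of_fg (fun _ hx => ⟨p ^ n, mem_map_of_mem _ hx⟩) hI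

variable [PerfectRing R p]

noncomputable def quotientFrobeniusPowEquiv (n : ℕ) : R ⧸ I ≃+* R ⧸ I.frobeniusPow p n :=
  quotientEquiv I _ (iterateFrobeniusEquiv R p n) rfl

theorem quotientFrobeniusPowEquiv_mk (n : ℕ) (x : R) :
    quotientFrobeniusPowEquiv p I n (mk I x) = mk _ (x ^ p ^ n) :=
  rfl

theorem factor_quotientFrobeniusPowEquiv_add (n j : ℕ) (y : R ⧸ I) :
    factor (I.frobeniusPow_add_le p n j) (quotientFrobeniusPowEquiv p I (n + j) y) =
      quotientFrobeniusPowEquiv p I n (y ^ p ^ j) := by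
  obtain ⟨x, rfl⟩ := mk_surjective y
  rw [← map_pow, quotientFrobeniusPowEquiv_mk, quotientFrobeniusPowEquiv_mk, factor_mk,
    ← pow_mul, ← pow_add, add_comm]

end Ideal

namespace Perfection

variable {A R : Type*} [NonAssocSemiring A] [CommSemiring R] (p : ℕ) [Fact p.Prime] [CharP R p]

variable (f : ℕ → A →+* R) (hf : ∀ n x, f (n + 1) x ^ p = f n x)

def liftRingHom : A →+* Perfection R p where
  toFun x := ⟨fun n => f n x, fun n => hf n x⟩
  map_one' := ext fun n => map_one (f n)
  map_mul' x y := ext fun n => map_mul (f n) x y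
  map_zero' := ext fun n => map_zero (f n)
  map_add' x y := ext fun n => map_add (f n) x y

theorem coeff_liftRingHom (n : ℕ) (x : A) :
    coeff R p n (liftRingHom p f hf x) = f n x :=
  rfl

end Perfection

namespace AdicCompletion

variable {R : Type*} [CommRing R] (I : Ideal R)

theorem factorPow_comp_evalₐ {m n : ℕ} (h : m ≤ n) :
    (factorPow I h).comp (evalₐ I n : AdicCompletion I R →+* R ⧸ I ^ n) = evalₐ I m := by
  ext x
  obtain ⟨x, rfl⟩ := mk_surjective I R x
  simp [evalₐ_mk, Ideal.mk_eq_mk I h]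

noncomputable def evalOfPowLE {J : Ideal R} (hJ : ∃ k, I ^ k ≤ J) :
    AdicCompletion I R →+* R ⧸ J :=
  (factor hJ.choose_spec).comp (evalₐ I hJ.choose)

theorem evalOfPowLE_eq {J : Ideal R} (hJ : ∃ k, I ^ k ≤ J) {k : ℕ} (hk : I ^ k ≤ J) :
    evalOfPowLE I hJ = (factor hk).comp (evalₐ I k) := by
  have reindex : ∀ {a b : ℕ} (ha : I ^ a ≤ J) (hab : a ≤ b),
      (factor ha).comp (evalₐ I a : AdicCompletion I R →+* R ⧸ I ^ a) =
        (factor ((Ideal.pow_le_pow_right hab).trans ha)).comp (evalₐ I b) := by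
    intro a b ha hab
    rw [← factorPow_comp_evalₐ I hab, ← RingHom.comp_assoc, factor_comp]
  rw [evalOfPowLE, reindex _ (le_max_left _ k), reindex hk (le_max_right hJ.choose k)]

theorem factor_comp_evalOfPowLE {J J' : Ideal R} (hJ : ∃ k, I ^ k ≤ J) (h : J ≤ J') :
    (factor h).comp (evalOfPowLE I hJ) = evalOfPowLE I (hJ.imp fun _ hk => hk.trans h) := by
  rw [evalOfPowLE, evalOfPowLE_eq I _ (hJ.choose_spec.trans h), ← RingHom.comp_assoc, factor_comp]

theorem evalOfPowLE_pow (n : ℕ) : evalOfPowLE I ⟨n, le_rfl⟩ = evalₐ I n := by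
  rw [evalOfPowLE_eq I _ le_rfl, factor_eq, RingHom.id_comp]

end AdicCompletion

section Tilt

open Ideal AdicCompletion

variable (p : ℕ) [hp : Fact p.Prime] {R : Type*} [CommRing R] [ExpChar R p] [PerfectRing R p]
  (I : Ideal R) [CharP (R ⧸ I) p]

noncomputable def tiltToQuotientFrobeniusPow (n : ℕ) :
    Perfection (R ⧸ I) p →+* R ⧸ I.frobeniusPow p n :=
  (quotientFrobeniusPowEquiv p I n : R ⧸ I →+* _).comp (Perfection.coeff _ p n)

theorem factor_tiltToQuotientFrobeniusPow (n j : ℕ) (x : Perfection (R ⧸ I) p) :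
    factor (I.frobeniusPow_add_le p n j) (tiltToQuotientFrobeniusPow p I (n + j) x) =
      tiltToQuotientFrobeniusPow p I n x := by
  simp only [tiltToQuotientFrobeniusPow, RingHom.comp_apply, RingEquiv.coe_toRingHom,
    factor_quotientFrobeniusPowEquiv_add, ← Perfection.coeffMonoidHom_eq_coeff,
    Perfection.coeffMonoidHom_pow_p_pow']

noncomputable def tiltToQuotientPow (n : ℕ) : Perfection (R ⧸ I) p →+* R ⧸ I ^ n :=
  (factor (I.frobeniusPow_le_pow p hp.out.one_lt n)).comp (tiltToQuotientFrobeniusPow p I n)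

theorem factorPow_comp_tiltToQuotientPow {m n : ℕ} (h : m ≤ n) :
    (factorPow I h).comp (tiltToQuotientPow p I n) = tiltToQuotientPow p I m := by
  obtain ⟨j, rfl⟩ := Nat.exists_eq_add_of_le h
  ext x
  simp only [tiltToQuotientPow, RingHom.comp_apply, factor_comp_apply]
  rw [← factor_tiltToQuotientFrobeniusPow p I m j, factor_comp_apply]

noncomputable def tiltToAdicCompletion : Perfection (R ⧸ I) p →+* AdicCompletion I R :=
  AdicCompletion.liftRingHom I (tiltToQuotientPow p I) (factorPow_comp_tiltToQuotientPow p I)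

theorem evalₐ_tiltToAdicCompletion (n : ℕ) (x : Perfection (R ⧸ I) p) :
    evalₐ I n (tiltToAdicCompletion p I x) = tiltToQuotientPow p I n x :=
  evalₐ_liftRingHom _ _ _ _ _

variable (hI : I.FG)

noncomputable def adicCompletionToTilt : AdicCompletion I R →+* Perfection (R ⧸ I) p :=
  Perfection.liftRingHom p
    (fun n => ((quotientFrobeniusPowEquiv p I n).symm : _ →+* R ⧸ I).comp
      (evalOfPowLE I (I.exists_pow_le_frobeniusPow p hI n)))
    (fun n x => (quotientFrobeniusPowEquiv p I n).injective <| by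
      have h := factor_quotientFrobeniusPowEquiv_add p I n 1
        ((quotientFrobeniusPowEquiv p I (n + 1)).symm
          (evalOfPowLE I (I.exists_pow_le_frobeniusPow p hI (n + 1)) x))
      rw [pow_one, RingEquiv.apply_symm_apply] at h
      simp only [RingHom.comp_apply, RingEquiv.coe_toRingHom]
      rw [← h, RingEquiv.apply_symm_apply, ← RingHom.comp_apply, factor_comp_evalOfPowLE])

theorem adicCompletionToTilt_comp_tiltToAdicCompletion :
    (adicCompletionToTilt p I hI).comp (tiltToAdicCompletion p I) = RingHom.id _ := by
  ext x : 1
  refine Perfection.ext fun n => ?_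
  obtain ⟨k, hk⟩ := I.exists_pow_le_frobeniusPow p hI n
  have hnk : I ^ (n + k) ≤ I.frobeniusPow p n := (Ideal.pow_le_pow_right (by omega)).trans hk
  rw [RingHom.comp_apply, adicCompletionToTilt, Perfection.coeff_liftRingHom, RingHom.comp_apply,
    evalOfPowLE_eq I _ hnk, RingHom.comp_apply, RingHom.coe_coe, AlgHom.coe_toRingHom,
    evalₐ_tiltToAdicCompletion, tiltToQuotientPow, RingHom.comp_apply, factor_comp_apply,
    factor_tiltToQuotientFrobeniusPow,
    tiltToQuotientFrobeniusPow, RingHom.comp_apply, RingEquiv.coe_toRingHom,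
    RingEquiv.symm_apply_apply, RingHom.id_apply]

theorem tiltToAdicCompletion_comp_adicCompletionToTilt :
    (tiltToAdicCompletion p I).comp (adicCompletionToTilt p I hI) = RingHom.id _ := by
  ext x : 1
  refine ext_evalₐ fun n => ?_
  rw [RingHom.comp_apply, evalₐ_tiltToAdicCompletion, tiltToQuotientPow, RingHom.comp_apply,
    tiltToQuotientFrobeniusPow, RingHom.comp_apply, adicCompletionToTilt,
    Perfection.coeff_liftRingHom, RingHom.comp_apply, RingEquiv.coe_toRingHom,
    RingEquiv.coe_toRingHom, RingEquiv.apply_symm_apply, ← RingHom.comp_apply,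
    factor_comp_evalOfPowLE, evalOfPowLE_pow]
  rfl

noncomputable def tiltEquivAdicCompletion : Perfection (R ⧸ I) p ≃+* AdicCompletion I R :=
  RingEquiv.ofRingHom (tiltToAdicCompletion p I) (adicCompletionToTilt p I hI)
    (tiltToAdicCompletion_comp_adicCompletionToTilt p I hI)
    (adicCompletionToTilt_comp_tiltToAdicCompletion p I hI)

end Tilt

/-- Let `S` be a perfect `𝔽_p`-algebra and `I` a finitely generated
ideal of `S`.  Then the tilt `(S/I)^♭ = lim_{x ↦ x^p} S/I` (Mathlib's
`Ring.Perfection (S ⧸ I) p`) is isomorphic as a ring to the `I`-adic completion of `S`. -/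
theorem tilt_iso_adicCompletion (p : ℕ) [Fact p.Prime]
    (S : Type*) [CommRing S] [CharP S p] [PerfectRing S p]
    (I : Ideal S) (hI : I.FG) [CharP (S ⧸ I) p] :
    Nonempty (Perfection (S ⧸ I) p ≃+* AdicCompletion I S) :=
  ⟨tiltEquivAdicCompletion p I hI⟩
end

section
/- Let S be a perfect F_p-algebra and I an ideal. For n ≥ 0 let I^{[p^n]} denote the ideal {x^{p^n} : x ∈ I} (an ideal since S is perfect). Then the p-th power map induces an isomorphism of rings φ^n : S/I → S/I^{[p^n]}, and if I is finitely generated, the filtrations {I^{[p^n]}} and {I^n} define the same topology on S. -/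
/-! Frobenius is a ring automorphism of a perfect ring, so it carries `I` onto `I^{[p^n]}` and
induces `S ⧸ I ≃+* S ⧸ I^{[p^n]}`. For the topologies: `x ^ p ^ n ∈ I ^ p ^ n ⊆ I ^ n` gives
`I^{[p^n]} ⊆ I ^ n`, while `I` lies in the radical of `I^{[p^n]}`, so a power of the finitely
generated ideal `I` lies in `I^{[p^n]}`. -/

namespace Ideal

variable {S : Type*} [CommRing S] (p : ℕ) [ExpChar S p] (I : Ideal S) (n : ℕ)

theorem coe_map_iterateFrobenius [PerfectRing S p] :
    (I.map (iterateFrobenius S p n) : Set S) = {y : S | ∃ x ∈ I, y = x ^ p ^ n} := by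
  ext y
  rw [SetLike.mem_coe,
    mem_map_iff_of_surjective (iterateFrobenius S p n) (iterateFrobeniusEquiv S p n).surjective]
  simp only [iterateFrobenius_def, Set.mem_ofPred_eq, eq_comm]

noncomputable def quotientIterateFrobeniusEquiv [PerfectRing S p] :
    (S ⧸ I) ≃+* S ⧸ I.map (iterateFrobenius S p n) :=
  quotientEquiv I _ (iterateFrobeniusEquiv S p n) rfl

@[simp]
theorem quotientIterateFrobeniusEquiv_mk [PerfectRing S p] (x : S) :
    quotientIterateFrobeniusEquiv p I n (Quotient.mk I x) =
      Quotient.mk (I.map (iterateFrobenius S p n)) (x ^ p ^ n) :=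
  quotientEquiv_mk _ _ _ _ x

theorem le_radical_map_iterateFrobenius : I ≤ (I.map (iterateFrobenius S p n)).radical :=
  fun x hx => ⟨p ^ n, by
    simpa only [iterateFrobenius_def] using mem_map_of_mem (iterateFrobenius S p n) hx⟩

theorem exists_pow_le_map_iterateFrobenius (hI : I.FG) :
    ∃ m : ℕ, I ^ m ≤ I.map (iterateFrobenius S p n) :=
  exists_pow_le_of_le_radical_of_fg (le_radical_map_iterateFrobenius p I n) hI

theorem map_iterateFrobenius_le_pow (hp : 1 < p) : I.map (iterateFrobenius S p n) ≤ I ^ n := by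
  rw [map_le_iff_le_comap]
  intro x hx
  have hpow : x ^ p ^ n ∈ I ^ p ^ n := pow_mem_pow hx _
  simpa only [mem_comap, iterateFrobenius_def] using
    pow_le_pow_right (Nat.lt_pow_self hp).le hpow

end Ideal

/-- Let `S` be a perfect `𝔽_p`-algebra and `I` an ideal.  For `n ≥ 0` let
`I^{[p^n]}` be the ideal of `p^n`-th powers of elements of `I` (equivalently, the image
ideal of `I` under the `n`-th iterate of Frobenius, since Frobenius is a ring
automorphism).  Then the `p^n`-th power map induces a ring isomorphism
`S/I ≃ S/I^{[p^n]}`, and if `I` is finitely generated, the filtrations `{I^{[p^n]}}` and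
`{I^n}` define the same topology on `S`. -/
theorem frobenius_power_ideal_iso_and_topology (p : ℕ) [Fact p.Prime]
    (S : Type*) [CommRing S] [CharP S p] [PerfectRing S p] (I : Ideal S) :
    (∀ n : ℕ,
      (I.map (iterateFrobenius S p n) : Set S) = {y : S | ∃ x ∈ I, y = x ^ p ^ n} ∧
      ∃ e : (S ⧸ I) ≃+* S ⧸ I.map (iterateFrobenius S p n),
        ∀ x : S, e (Ideal.Quotient.mk I x) =
          Ideal.Quotient.mk (I.map (iterateFrobenius S p n)) (x ^ p ^ n)) ∧
    (I.FG →
      (∀ n : ℕ, ∃ m : ℕ, I ^ m ≤ I.map (iterateFrobenius S p n)) ∧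
      (∀ n : ℕ, ∃ m : ℕ, I.map (iterateFrobenius S p m) ≤ I ^ n)) :=
  ⟨fun n => ⟨I.coe_map_iterateFrobenius p n,
      I.quotientIterateFrobeniusEquiv p n, I.quotientIterateFrobeniusEquiv_mk p n⟩,
    fun hI => ⟨fun n => I.exists_pow_le_map_iterateFrobenius p n hI,
      fun n => ⟨n, I.map_iterateFrobenius_le_pow p n (Fact.out : p.Prime).one_lt⟩⟩⟩
end

section
/- Let A be an Artinian local ring with residue field F_p and maximal ideal m, and let R be a perfect F_p-algebra. Set W_A(R) := A ⊗_{Z_p} W(R), where W(R) is the ring of p-typical Witt vectors. Then the tilt W_A(R)^♭ := lim_{x↦x^p} W_A(R)/p is isomorphic to R. -/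
/-!
Reduction modulo `m` together with the zeroth Witt coefficient gives a surjection
`W_A(R)/p → R`. Every element of `A` is an integer modulo `m` (as `A/m = 𝔽_p`), and a Witt
vector over the perfect ring `R` with vanishing zeroth coefficient is divisible by `p`; so the
kernel of this surjection is generated by the image of `m`, which is nilpotent since `A` is
Artinian. On a nilpotent ideal a fixed power `x ↦ x ^ p ^ k` vanishes, and this makes the map
induced on perfections bijective. Finally `R`, being perfect, is its own perfection.
-/

open scoped TensorProduct

namespace Perfection

variable {p : ℕ} [Fact p.Prime] {B S : Type*} [CommRing B] [CharP B p] [CommRing S] [CharP S p]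

theorem coeff_pow_p_pow' (a : Perfection B p) (n k : ℕ) :
    coeff B p (n + k) a ^ p ^ k = coeff B p n a :=
  coeffMonoidHom_pow_p_pow' a n k

theorem map_injective_of_pow_eq_zero_of_mem_ker (f : B →+* S) {k : ℕ}
    (hk : ∀ x ∈ RingHom.ker f, x ^ p ^ k = 0) : Function.Injective (map p f) := by
  refine (injective_iff_map_eq_zero _).2 fun a ha => ext fun n => ?_
  rw [map_zero, ← coeff_pow_p_pow' a n k]
  refine hk _ ?_
  simpa using congrArg (coeff S p (n + k)) ha

theorem map_surjective_of_pow_eq_zero_of_mem_ker (f : B →+* S) (hf : Function.Surjective f)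
    {k : ℕ} (hk : ∀ x ∈ RingHom.ker f, x ^ p ^ k = 0) : Function.Surjective (map p f) := by
  intro y
  choose g hg using hf
  have pow_eq_of_map_eq (c d : B) (h : f c = f d) : c ^ p ^ k = d ^ p ^ k :=
    sub_eq_zero.1 <| (sub_pow_char_pow c d k).symm.trans <| hk _ <| by simp [RingHom.mem_ker, h]
  refine ⟨⟨fun n => g (coeff S p (n + k) y) ^ p ^ k, fun n => ?_⟩, ext fun n => ?_⟩
  · show (g (coeff S p (n + 1 + k) y) ^ p ^ k) ^ p = g (coeff S p (n + k) y) ^ p ^ k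
    rw [← pow_mul, ← pow_succ, pow_succ', pow_mul]
    apply pow_eq_of_map_eq
    rw [map_pow, hg, hg, Nat.add_right_comm, coeff_pow_p']
  · show f (g (coeff S p (n + k) y) ^ p ^ k) = coeff S p n y
    rw [map_pow, hg, coeff_pow_p_pow']

theorem map_bijective_of_isNilpotent_ker (f : B →+* S) (hf : Function.Surjective f)
    (hker : IsNilpotent (RingHom.ker f)) : Function.Bijective (map p f) := by
  obtain ⟨k, hk⟩ := hker
  have hpow (x : B) (hx : x ∈ RingHom.ker f) : x ^ p ^ k = 0 :=
    Ideal.pow_eq_zero_of_mem hk (Nat.lt_pow_self (Fact.out : p.Prime).one_lt).le hx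
  exact ⟨map_injective_of_pow_eq_zero_of_mem_ker f hpow,
    map_surjective_of_pow_eq_zero_of_mem_ker f hf hpow⟩

end Perfection

theorem IsLocalRing.exists_intCast_sub_mem_maximalIdeal {A : Type*} [CommRing A] [IsLocalRing A]
    {p : ℕ} (e : IsLocalRing.ResidueField A ≃+* ZMod p) (a : A) :
    ∃ c : ℤ, a - c ∈ IsLocalRing.maximalIdeal A := by
  obtain ⟨c, hc⟩ := ZMod.intCast_surjective (e (IsLocalRing.residue A a))
  exact ⟨c, (IsLocalRing.residue_eq_zero_iff _).1 <| e.injective <| by simp [hc]⟩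

namespace Algebra.TensorProduct

theorem exists_sub_includeRight_mem_map_includeLeft {R A W : Type*} [CommRing R] [CommRing A]
    [Algebra R A] [CommRing W] [Algebra R W] {I : Ideal A}
    (hI : ∀ a : A, ∃ c : R, a - algebraMap R A c ∈ I) (x : A ⊗[R] W) :
    ∃ w : W, x - includeRight w ∈ I.map (includeLeft : A →ₐ[R] A ⊗[R] W) := by
  induction x using TensorProduct.induction_on with
  | zero => exact ⟨0, by simp⟩
  | add x y hx hy =>
    obtain ⟨w₁, hw₁⟩ := hx
    obtain ⟨w₂, hw₂⟩ := hy
    exact ⟨w₁ + w₂, by simpa [map_add, add_sub_add_comm] using add_mem hw₁ hw₂⟩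
  | tmul a w =>
    obtain ⟨c, hc⟩ := hI a
    refine ⟨c • w, ?_⟩
    have : a ⊗ₜ[R] w - includeRight (c • w) =
        (includeLeft : A →ₐ[R] A ⊗[R] W) (a - algebraMap R A c) * includeRight w := by
      simp [TensorProduct.sub_tmul, sub_mul, Algebra.algebraMap_eq_smul_one,
        TensorProduct.smul_tmul']
    rw [this]
    exact Ideal.mul_mem_right _ _ (Ideal.mem_map_of_mem _ hc)

end Algebra.TensorProduct

theorem Ideal.isNilpotent_ker_quotient_lift {T S : Type*} [CommRing T] [CommRing S]
    (φ : T →+* S) {P I : Ideal T} (hP : P ≤ RingHom.ker φ) (hI : IsNilpotent I)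
    (hker : RingHom.ker φ ≤ I ⊔ P) :
    IsNilpotent (RingHom.ker (Ideal.Quotient.lift P φ hP)) := by
  obtain ⟨n, hn⟩ := hI.map (Ideal.mapHom (Ideal.Quotient.mk P))
  refine ⟨n, le_bot_iff.1 ?_⟩
  calc RingHom.ker (Ideal.Quotient.lift P φ hP) ^ n
      = (RingHom.ker φ |>.map (Ideal.Quotient.mk P)) ^ n := by rw [Ideal.ker_quotient_lift]
    _ ≤ ((I ⊔ P).map (Ideal.Quotient.mk P)) ^ n := Ideal.pow_right_mono (Ideal.map_mono hker) n
    _ = (I.map (Ideal.Quotient.mk P)) ^ n := by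
      rw [Ideal.map_sup, Ideal.map_quotient_self, sup_bot_eq]
    _ = ⊥ := hn

namespace WittVector

open Algebra.TensorProduct (includeLeft includeRight)

variable {p : ℕ} [Fact p.Prime] {A R : Type*} [CommRing A] [CommRing R]

noncomputable def tensorConstantCoeff (σ : A →+* R) : A ⊗[ℤ] WittVector p R →+* R :=
  (Algebra.TensorProduct.lift σ.toIntAlgHom (constantCoeff : WittVector p R →+* R).toIntAlgHom
    fun _ _ => .all _ _).toRingHom

@[simp]
theorem tensorConstantCoeff_tmul (σ : A →+* R) (a : A) (w : WittVector p R) :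
    tensorConstantCoeff σ (a ⊗ₜ w) = σ a * w.coeff 0 :=
  rfl

theorem tensorConstantCoeff_surjective (σ : A →+* R) :
    Function.Surjective (tensorConstantCoeff (p := p) σ) := fun r => by
  obtain ⟨w, rfl⟩ := constantCoeff_surjective (p := p) r
  exact ⟨1 ⊗ₜ w, by simp⟩

theorem ker_tensorConstantCoeff_le [CharP R p] [PerfectRing R p] (σ : A →+* R) {I : Ideal A}
    (hIσ : I ≤ RingHom.ker σ) (hI : ∀ a : A, ∃ c : ℤ, a - c ∈ I) :
    RingHom.ker (tensorConstantCoeff (p := p) σ) ≤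
      I.map (includeLeft : A →ₐ[ℤ] A ⊗[ℤ] WittVector p R) ⊔
        Ideal.span {(p : A ⊗[ℤ] WittVector p R)} := by
  intro x hx
  obtain ⟨w, hw⟩ := Algebra.TensorProduct.exists_sub_includeRight_mem_map_includeLeft
    (fun a => by simpa using hI a) x
  have hIφ : I.map (includeLeft : A →ₐ[ℤ] A ⊗[ℤ] WittVector p R) ≤
      RingHom.ker (tensorConstantCoeff σ) :=
    Ideal.map_le_iff_le_comap.2 fun a ha => by simpa using hIσ ha
  have hwp : w ∈ Ideal.span {(p : WittVector p R)} :=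
    (mem_span_p_iff_coeff_zero_eq_zero w).2 <| by
      simpa [sub_sub_cancel, RingHom.mem_ker] using sub_mem hx (hIφ hw)
  refine Submodule.mem_sup.2 ⟨_, hw, _, ?_, sub_add_cancel x _⟩
  obtain ⟨u, rfl⟩ := Ideal.mem_span_singleton'.1 hwp
  exact Ideal.mem_span_singleton'.2 ⟨includeRight u, by rw [map_mul, map_natCast]⟩

end WittVector

/-- Let `(A, m)` be an Artinian local ring with residue field `𝔽_p` and
let `R` be a perfect `𝔽_p`-algebra.  Set `W_A(R) := A ⊗_{ℤ_p} W(R)` (since `p` is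
nilpotent in `A`, tensoring over `ℤ_p` agrees with tensoring over `ℤ`, so we work with
`A ⊗_ℤ W(R)`).  Then the tilt `W_A(R)^♭ = lim_{x ↦ x^p} W_A(R)/p` is isomorphic to `R`. -/
theorem tilt_of_WA_iso (p : ℕ) [Fact p.Prime]
    (A : Type*) [CommRing A] [IsArtinianRing A] [IsLocalRing A]
    (hres : Nonempty (IsLocalRing.ResidueField A ≃+* ZMod p))
    (R : Type*) [CommRing R] [CharP R p] [PerfectRing R p]
    [CharP ((A ⊗[ℤ] WittVector p R) ⧸
      (Ideal.span {(p : A ⊗[ℤ] WittVector p R)})) p] :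
    Nonempty (@Perfection ((A ⊗[ℤ] WittVector p R) ⧸
      (Ideal.span {(p : A ⊗[ℤ] WittVector p R)}))
      (@NPow.toPow _ (@Monoid.toNPow _ (CommMonoid.toMonoid (M := (A ⊗[ℤ] WittVector p R) ⧸
      (Ideal.span {(p : A ⊗[ℤ] WittVector p R)}))))) p ≃+* R) := by
  obtain ⟨e⟩ := hres
  let σ : A →+* R := (ZMod.castHom dvd_rfl R).comp (e.toRingHom.comp (IsLocalRing.residue A))
  have hmσ : IsLocalRing.maximalIdeal A ≤ RingHom.ker σ := fun a ha => by
    simp [σ, (IsLocalRing.residue_eq_zero_iff a).2 ha]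
  have hpφ : Ideal.span {(p : A ⊗[ℤ] WittVector p R)} ≤
      RingHom.ker (WittVector.tensorConstantCoeff σ) :=
    (Ideal.span_singleton_le_iff_mem _).2 (by simp)
  let f := Ideal.Quotient.lift _ _ hpφ
  have hf : Function.Surjective f := Ideal.Quotient.lift_surjective_of_surjective _ hpφ
    (WittVector.tensorConstantCoeff_surjective σ)
  have hker : IsNilpotent (RingHom.ker f) :=
    Ideal.isNilpotent_ker_quotient_lift _ hpφ
      (((isArtinianRing_iff_isNilpotent_maximalIdeal A).1 ‹_›).map (Ideal.mapHom _))
      (WittVector.ker_tensorConstantCoeff_le σ hmσ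
        (IsLocalRing.exists_intCast_sub_mem_maximalIdeal e))
  exact ⟨(RingEquiv.ofBijective _ (Perfection.map_bijective_of_isNilpotent_ker f hf hker)).trans
    (PerfectionMap.id p R).equiv.symm⟩
end

section
/- Let B be a commutative ring in which p is nilpotent. Then the natural (multiplicative) bijection lim_{x↦x^p} B → lim_{x↦x^p} B/p is a bijection of sets, and hence the inverse limit lim_{x↦x^p} B of the p-power maps carries a natural commutative ring structure (the tilt B^♭), with addition given by (a_n) + (b_n) = (c_n) where c_n = lim_k (a_{n+k} + b_{n+k})^{p^k} mod p. -/
/-!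
Modulo a nilpotent ideal `I ∋ p` with `I ^ N = 0`, congruent elements have equal `p ^ k`-th powers
once `k ≥ N`, since `x ≡ y [SMOD I]` gives `x ^ p ^ k ≡ y ^ p ^ k [SMOD I ^ (k + 1)]`. So any
sequence `s` whose reduction is a compatible system of `p`-th roots in `B ⧸ I` has an eventually
constant limit `c n = s (n + k) ^ p ^ k`, and `c` is the unique compatible system in `B` lifting
`s mod I`. Applied to `s = a + b`, whose reduction is compatible because Frobenius is additive
on `B ⧸ p`, this is the addition of the tilt.
-/

section

variable {p : ℕ} {B : Type*} [CommRing B]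

theorem add_pow_prime_of_natCast_eq_zero (hp : p.Prime) (hpB : (p : B) = 0) (x y : B) :
    (x + y) ^ p = x ^ p + y ^ p := by
  rw [(Commute.all x y).add_pow_prime_eq hp, hpB]
  ring

variable {I : Ideal B} {N : ℕ}

theorem Ideal.pow_prime_pow_eq_of_mk_eq (hpI : (p : B) ∈ I) (hIN : I ^ N = ⊥) {x y : B}
    (h : Ideal.Quotient.mk I x = Ideal.Quotient.mk I y) {k : ℕ} (hk : N ≤ k) :
    x ^ p ^ k = y ^ p ^ k := by
  have hbot : I ^ (k + 1) = ⊥ := le_bot_iff.mp (hIN ▸ Ideal.pow_le_pow_right (by omega))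
  have := (SModEq.idealQuotientMk.mpr h).pow_pow_add_one hpI k
  rwa [hbot, SModEq.bot] at this

namespace Perfection

theorem exists_lift_eq_pow_prime_pow (hpI : (p : B) ∈ I) (hIN : I ^ N = ⊥) (s : ℕ → B)
    (hs : ∀ n, Ideal.Quotient.mk I (s (n + 1)) ^ p = Ideal.Quotient.mk I (s n)) :
    ∃ c : Perfection B p,
      (∀ n, Ideal.Quotient.mk I (coeffMonoidHom B p n c) = Ideal.Quotient.mk I (s n)) ∧
      ∀ n k, N ≤ k → s (n + k) ^ p ^ k = coeffMonoidHom B p n c := by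
  let g : Perfection (B ⧸ I) p := ⟨fun n => Ideal.Quotient.mk I (s n), hs⟩
  have hg (n j : ℕ) : Ideal.Quotient.mk I (s (n + j) ^ p ^ j) = Ideal.Quotient.mk I (s n) := by
    rw [map_pow]
    exact coeffMonoidHom_pow_p_pow' g n j
  have stable (n k : ℕ) (hk : N ≤ k) : s (n + k) ^ p ^ k = s (n + N) ^ p ^ N := by
    obtain ⟨j, rfl⟩ := Nat.exists_eq_add_of_le hk
    calc s (n + (N + j)) ^ p ^ (N + j) = (s (n + N + j) ^ p ^ j) ^ p ^ N := by
          rw [← pow_mul, ← pow_add, add_comm j, add_assoc]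
      _ = s (n + N) ^ p ^ N := Ideal.pow_prime_pow_eq_of_mk_eq hpI hIN (hg _ _) le_rfl
  refine ⟨⟨fun n => s (n + N) ^ p ^ N, fun n => ?_⟩, fun n => hg n N, stable⟩
  calc (s (n + 1 + N) ^ p ^ N) ^ p = s (n + (N + 1)) ^ p ^ (N + 1) := by
        rw [← pow_mul, ← pow_succ, add_right_comm, add_assoc]
    _ = s (n + N) ^ p ^ N := stable n (N + 1) (by omega)

theorem mapMonoidHom_quotientMk_bijective (hpI : (p : B) ∈ I) (hIN : I ^ N = ⊥) :
    Function.Bijective (mapMonoidHom p (Ideal.Quotient.mk I : B →* B ⧸ I)) := by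
  constructor
  · intro f g hfg
    refine extMonoid fun n => ?_
    have h := congrArg (coeffMonoidHom _ p (n + N)) hfg
    rw [← coeffMonoidHom_pow_p_pow' f n N, ← coeffMonoidHom_pow_p_pow' g n N]
    exact Ideal.pow_prime_pow_eq_of_mk_eq hpI hIN h le_rfl
  · intro g
    choose s hs using fun n => Ideal.Quotient.mk_surjective (coeffMonoidHom _ p n g)
    obtain ⟨c, hc, -⟩ := exists_lift_eq_pow_prime_pow hpI hIN s fun n => by
      rw [hs, hs, coeffMonoidHom_pow_p']
    exact ⟨c, extMonoid fun n => by rw [coeffMonoidHom_mapMonoidHom, ← hs n]; exact hc n⟩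

end Perfection

end

/-- Let `B` be a commutative ring in which `p` is nilpotent.  Then the
natural map `lim_{x ↦ x^p} B → lim_{x ↦ x^p} B/p` is a bijection; hence the inverse limit
`lim_{x ↦ x^p} B` carries a natural commutative ring structure (the tilt `B^♭`), whose
addition is given by `(a_n) + (b_n) = (c_n)` with
`c_n = lim_k (a_{n+k} + b_{n+k})^{p^k}` (the limit being eventually constant), reducing
mod `p` to the addition of the perfection of `B/p`. -/
theorem tilt_bijection_and_addition (p : ℕ) [Fact p.Prime]
    (B : Type*) [CommRing B] (N : ℕ) (hN : (p : B) ^ N = 0) :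
    Function.Bijective
      (fun f : {f : ℕ → B // ∀ n, (f (n + 1)) ^ p = f n} =>
        (⟨fun n => Ideal.Quotient.mk (Ideal.span {(p : B)}) (f.1 n),
          fun n => by rw [← map_pow]; exact congrArg _ (f.2 n)⟩ :
          {g : ℕ → B ⧸ Ideal.span {(p : B)} // ∀ n, (g (n + 1)) ^ p = g n})) ∧
    ∀ a b : {f : ℕ → B // ∀ n, (f (n + 1)) ^ p = f n},
      ∃ c : {f : ℕ → B // ∀ n, (f (n + 1)) ^ p = f n},
        (∀ n, Ideal.Quotient.mk (Ideal.span {(p : B)}) (c.1 n) =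
            Ideal.Quotient.mk (Ideal.span {(p : B)}) (a.1 n) +
            Ideal.Quotient.mk (Ideal.span {(p : B)}) (b.1 n)) ∧
        ∀ n, ∃ K, ∀ k ≥ K, (a.1 (n + k) + b.1 (n + k)) ^ p ^ k = c.1 n := by
  set I := Ideal.span {(p : B)}
  have hpI : (p : B) ∈ I := Ideal.mem_span_singleton_self _
  have hIN : I ^ N = ⊥ := by rw [Ideal.span_singleton_pow, hN, Ideal.span_singleton_eq_bot]
  have hp_quot : (p : B ⧸ I) = 0 := by
    rw [← map_natCast (Ideal.Quotient.mk I), Ideal.Quotient.eq_zero_iff_mem]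
    exact hpI
  refine ⟨Perfection.mapMonoidHom_quotientMk_bijective hpI hIN, fun a b => ?_⟩
  obtain ⟨c, hc_mk, hc_lim⟩ :=
    Perfection.exists_lift_eq_pow_prime_pow hpI hIN (fun n => a.1 n + b.1 n) fun n => by
      rw [map_add, map_add, add_pow_prime_of_natCast_eq_zero Fact.out hp_quot, ← map_pow,
        ← map_pow, a.2, b.2]
  exact ⟨c, fun n => (hc_mk n).trans (map_add _ _ _), fun n => ⟨N, hc_lim n⟩⟩
end

section
/- Let A be a Q-algebra and X = Spec B a G_a-module scheme over A (an affine scheme with a module structure over the ring scheme G_a, functorially in A-algebras). Then there is an A-module M and an isomorphism of G_a-modules X ≅ Spec(Sym_A(M)); moreover one can take M = B_1, the degree-1 part of the induced grading on B. -/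
/-!
Over `ℚ`, the binomial identity with `j = 1` gives `(n + 1) • b = μ ((p₁ ⊗ pₙ) (Δ b))` for
`b ∈ B_{n+1}`, so `B` is generated by `B₁` and restriction to `B₁` is injective.
For surjectivity, extend `g : B₁ → C` by zero to a map `δ : B → C` of degree one. It is an
`ε`-derivation, `δ (x y) = δ x ε y + ε x δ y`, so its convolution powers obey Leibniz's rule
`δⁿ (x y) = ∑ C(n, k) δᵏ x δⁿ⁻ᵏ y`; moreover `δⁿ` vanishes off degree `n`. Hence the
convolution exponential of `δ`, which is `δⁿ / n!` on `Bₙ`, is an algebra map extending `g`.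
-/

open TensorProduct

universe u v w

open Coalgebra WithConv Finset Filter
open scoped Nat

lemma Nat.factorial_inv_mul_choose (a b : ℕ) :
    ((a + b)! : ℚ)⁻¹ * (a + b).choose a = (a ! : ℚ)⁻¹ * (b ! : ℚ)⁻¹ := by
  rw [Nat.cast_add_choose]
  field_simp

lemma eq_zero_of_nsmul_eq_self {M : Type*} [AddCommGroup M] [Module ℚ M] {n : ℕ} (hn : n ≠ 1)
    {a : M} (h : n • a = a) : a = 0 := by
  have hn' : (n : ℚ) - 1 ≠ 0 := sub_ne_zero.mpr (mod_cast hn)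
  have : ((n : ℚ) - 1) • a = 0 := by rw [sub_smul, one_smul, Nat.cast_smul_eq_nsmul, h, sub_self]
  simpa [hn'] using this

lemma Submodule.mem_of_nsmul_mem {R M : Type*} [CommSemiring R] [Algebra ℚ R]
    [AddCommMonoid M] [Module R M] (S : Submodule R M) {n : ℕ} (hn : n ≠ 0) {x : M}
    (h : n • x ∈ S) : x ∈ S := by
  have hx : algebraMap ℚ R (n : ℚ)⁻¹ • n • x = x := by
    rw [← Nat.cast_smul_eq_nsmul R, smul_smul, ← map_natCast (algebraMap ℚ R), ← map_mul,
      inv_mul_cancel₀ (mod_cast hn), map_one, one_smul]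
  exact hx ▸ S.smul_mem _ h

lemma Bialgebra.counit_mul'_comul {R B : Type*} [CommSemiring R] [Semiring B] [Bialgebra R B]
    (b : B) : counit (R := R) (LinearMap.mul' R B (comul b)) = counit b := by
  conv_rhs => rw [← sum_counit_smul (ℛ R b)]
  simp [← (ℛ R b).eq, smul_eq_mul]

namespace LinearMap

variable {R B C : Type*} [CommSemiring R] [Semiring B] [Bialgebra R B] [CommSemiring C]
  [Algebra R C]

noncomputable def convTensor (f g : WithConv (B →ₗ[R] C)) : WithConv (B ⊗[R] B →ₗ[R] C) :=
  toConv (mul' R C ∘ₗ TensorProduct.map f.ofConv g.ofConv)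

@[simp]
lemma convTensor_tmul (f g : WithConv (B →ₗ[R] C)) (x y : B) :
    convTensor f g (x ⊗ₜ y) = f x * g y := rfl

lemma convTensor_mul_convTensor (f g h k : WithConv (B →ₗ[R] C)) :
    convTensor f g * convTensor h k = convTensor (f * h) (g * k) := by
  have := algHom_comp_convMul_distrib (Algebra.TensorProduct.lmul' R (S := C))
    (toConv (TensorProduct.map f.ofConv g.ofConv)) (toConv (TensorProduct.map h.ofConv k.ofConv))
  rw [map_convMul_map] at this
  exact WithConv.ext this.symm

@[simp]
lemma convTensor_one_one : convTensor (1 : WithConv (B →ₗ[R] C)) 1 = 1 := by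
  ext x y
  simp [mul_comm]

lemma commute_convTensor (f g : WithConv (B →ₗ[R] C)) :
    Commute (convTensor f 1) (convTensor 1 g) := by
  simp only [Commute, SemiconjBy, convTensor_mul_convTensor, mul_one, one_mul]

lemma convTensor_one_pow (f : WithConv (B →ₗ[R] C)) (n : ℕ) :
    convTensor f 1 ^ n = convTensor (f ^ n) 1 := by
  induction n with
  | zero => simp
  | succ n ih => rw [pow_succ, ih, convTensor_mul_convTensor, pow_succ, one_mul]

lemma one_convTensor_pow (f : WithConv (B →ₗ[R] C)) (n : ℕ) :
    convTensor 1 f ^ n = convTensor 1 (f ^ n) := by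
  induction n with
  | zero => simp
  | succ n ih => rw [pow_succ, ih, convTensor_mul_convTensor, pow_succ, one_mul]

noncomputable def convCompMul : WithConv (B →ₗ[R] C) →* WithConv (B ⊗[R] B →ₗ[R] C) where
  toFun f := toConv (f.ofConv ∘ₗ mul' R B)
  map_one' := by
    ext x y
    simp [mul_comm]
  map_mul' f g := WithConv.ext (convMul_comp_coalgHom_distrib f g (Bialgebra.mulCoalgHom R B))

@[simp]
lemma convCompMul_apply (f : WithConv (B →ₗ[R] C)) (t : B ⊗[R] B) :
    convCompMul f t = f (mul' R B t) := rfl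

/-- Precomposition with multiplication, a monoid map for convolution because multiplication is a
coalgebra map, sends the `ε`-derivation `δ` to the sum of the commuting elements
`convTensor δ 1` and `convTensor 1 δ`, so the binomial theorem applies. -/
lemma convPow_apply_mul (δ : WithConv (B →ₗ[R] C))
    (hδ : ∀ x y, δ (x * y) = δ x * algebraMap R C (counit y) + algebraMap R C (counit x) * δ y)
    (n : ℕ) (x y : B) :
    (δ ^ n) (x * y) = ∑ m ∈ antidiagonal n, n.choose m.1 • ((δ ^ m.1) x * (δ ^ m.2) y) := by
  have hsplit : convCompMul δ = convTensor δ 1 + convTensor 1 δ := by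
    ext a b
    exact hδ a b
  have := congr($(map_pow convCompMul δ n) (x ⊗ₜ y))
  rw [hsplit, (commute_convTensor δ δ).add_pow'] at this
  simpa only [convTensor_one_pow, one_convTensor_pow, convTensor_mul_convTensor, mul_one, one_mul,
    ofConv_sum, ofConv_smul, sum_apply, smul_apply, convTensor_tmul, convCompMul_apply,
    mul'_apply] using this

end LinearMap

namespace GradedBialgebra

variable {A B : Type*} [CommRing A] [Semiring B] [Bialgebra A B] (ℬ : ℕ → Submodule A B)

def IsOfDegree {M : Type*} [AddCommMonoid M] [Module A M] (d : ℕ) (f : B →ₗ[A] M) : Prop :=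
  ∀ j ≠ d, ∀ b ∈ ℬ j, f b = 0

variable {ℬ} in
lemma isOfDegree_convOne {C : Type*} [Semiring C] [Algebra A C]
    (hε : IsOfDegree ℬ 0 (counit (R := A) (A := B))) :
    IsOfDegree ℬ 0 (1 : WithConv (B →ₗ[A] C)).ofConv := by
  intro j hj b hb
  simp [LinearMap.convOne_def, hε j hj b hb]

variable [GradedAlgebra ℬ]

def IsGradedComul : Prop :=
  ∀ (i : ℕ) (b : B), b ∈ ℬ i → ∀ j k : ℕ, j + k ≠ i →
    TensorProduct.map (GradedAlgebra.proj ℬ j) (GradedAlgebra.proj ℬ k) (comul (R := A) b) = 0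

def IsBinomialComul : Prop :=
  ∀ (i : ℕ) (b : B), b ∈ ℬ i → ∀ j k : ℕ, j + k = i →
    LinearMap.mul' A B
      (TensorProduct.map (GradedAlgebra.proj ℬ j) (GradedAlgebra.proj ℬ k) (comul (R := A) b)) =
      i.choose j • b

lemma proj_mem (i : ℕ) (x : B) : GradedAlgebra.proj ℬ i x ∈ ℬ i := by
  rw [GradedAlgebra.proj_apply]
  exact SetLike.coe_mem _

lemma eventually_sum_proj (x : B) :
    ∀ᶠ n in atTop, ∑ j ∈ range n, GradedAlgebra.proj ℬ j x = x := by
  induction x using DirectSum.Decomposition.inductionOn ℬ with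
  | zero => simp
  | @homogeneous i x =>
    filter_upwards [eventually_gt_atTop i] with n hn
    rw [Finset.sum_eq_single_of_mem i (mem_range.mpr hn) fun j _ hj => by
      simp [GradedAlgebra.proj_apply, DirectSum.of_eq_of_ne _ _ _ hj]]
    simp [GradedAlgebra.proj_apply]
  | add x y hx hy =>
    filter_upwards [hx, hy] with n hx hy
    simp only [map_add, sum_add_distrib, hx, hy]

lemma eventually_sum_map_proj (t : B ⊗[A] B) :
    ∀ᶠ n in atTop, ∑ j ∈ range n, ∑ k ∈ range n,
      TensorProduct.map (GradedAlgebra.proj ℬ j) (GradedAlgebra.proj ℬ k) t = t := by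
  induction t using TensorProduct.induction_on with
  | zero => simp
  | tmul x y =>
    filter_upwards [eventually_sum_proj ℬ x, eventually_sum_proj ℬ y] with n hx hy
    simp only [TensorProduct.map_tmul, ← tmul_sum, ← sum_tmul, hx, hy]
  | add s t hs ht =>
    filter_upwards [hs, ht] with n hs ht
    simp only [map_add, sum_add_distrib, hs, ht]

lemma exists_isOfDegree_extend {M : Type*} [AddCommMonoid M] [Module A M] (d : ℕ)
    (g : ℬ d →ₗ[A] M) : ∃ f : B →ₗ[A] M, IsOfDegree ℬ d f ∧ ∀ x : ℬ d, f x = g x := by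
  refine ⟨g ∘ₗ DirectSum.component A ℕ (fun i => ℬ i) d ∘ₗ
    (DirectSum.decomposeLinearEquiv ℬ).toLinearMap, fun j hj b hb => ?_, fun x => ?_⟩
  · rw [LinearMap.comp_apply, LinearMap.comp_apply, LinearEquiv.coe_coe,
      DirectSum.decomposeLinearEquiv_apply, DirectSum.decompose_of_mem ℬ hb,
      ← DirectSum.apply_eq_component, DirectSum.of_eq_of_ne _ _ _ hj.symm, map_zero]
  · simp

variable {ℬ}

lemma IsGradedComul.comul_eq_sum (h : IsGradedComul ℬ) {i : ℕ} {b : B} (hb : b ∈ ℬ i) :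
    comul (R := A) b = ∑ q ∈ antidiagonal i,
      TensorProduct.map (GradedAlgebra.proj ℬ q.1) (GradedAlgebra.proj ℬ q.2) (comul b) := by
  obtain ⟨n, hn, hin⟩ := ((eventually_sum_map_proj ℬ (comul (R := A) b)).and
    (eventually_gt_atTop i)).exists
  conv_lhs => rw [← hn, ← sum_product']
  refine (sum_subset (fun q hq => ?_) fun q _ hq => h i b hb _ _ ?_).symm
  · rw [HasAntidiagonal.mem_antidiagonal] at hq
    simp only [mem_product, mem_range]
    omega
  · simpa using hq

lemma IsOfDegree.comp_proj {M : Type*} [AddCommMonoid M] [Module A M] {d : ℕ} {f : B →ₗ[A] M}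
    (hf : IsOfDegree ℬ d f) : f ∘ₗ GradedAlgebra.proj ℬ d = f := by
  ext x
  induction x using DirectSum.Decomposition.inductionOn ℬ with
  | zero => simp
  | @homogeneous i x =>
    by_cases hi : i = d
    · subst hi
      simp [GradedAlgebra.proj_apply]
    · simp [GradedAlgebra.proj_apply, DirectSum.of_eq_of_ne _ _ _ (Ne.symm hi), hf i hi x x.2]
  | add x y hx hy => simp only [map_add, hx, hy]

lemma IsOfDegree.convMul {C : Type*} [Semiring C] [Algebra A C] (h : IsGradedComul ℬ) {d e : ℕ}
    {f g : WithConv (B →ₗ[A] C)} (hf : IsOfDegree ℬ d f.ofConv) (hg : IsOfDegree ℬ e g.ofConv) :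
    IsOfDegree ℬ (d + e) (f * g).ofConv := by
  intro i hi b hb
  rw [LinearMap.convMul_def, ofConv_toConv, ← hf.comp_proj, ← hg.comp_proj, TensorProduct.map_comp]
  simp [h i b hb d e (Ne.symm hi)]

lemma isOfDegree_counit [Algebra ℚ A] (h₁ : IsGradedComul ℬ) (h₂ : IsBinomialComul ℬ) :
    IsOfDegree ℬ 0 (counit (R := A) (A := B)) := by
  intro i hi b hb
  refine eq_zero_of_nsmul_eq_self (n := 2 ^ i) (Nat.one_lt_two_pow hi).ne' ?_
  symm
  calc counit b
      = counit (LinearMap.mul' A B (comul b)) := by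
        rw [Bialgebra.counit_mul'_comul]
    _ = ∑ q ∈ antidiagonal i, counit (R := A) (LinearMap.mul' A B
          (TensorProduct.map (GradedAlgebra.proj ℬ q.1) (GradedAlgebra.proj ℬ q.2) (comul b))) := by
        conv_lhs => rw [h₁.comul_eq_sum hb, map_sum, map_sum]
    _ = ∑ q ∈ antidiagonal i, i.choose q.1 • counit (R := A) b := sum_congr rfl fun q hq => by
        rw [h₂ i b hb q.1 q.2 (HasAntidiagonal.mem_antidiagonal.mp hq), map_nsmul]
    _ = 2 ^ i • counit b := by
        rw [← sum_smul, Nat.sum_antidiagonal_eq_sum_range_succ_mk, Nat.sum_range_choose]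

lemma IsOfDegree.convPow {C : Type*} [Semiring C] [Algebra A C] {d : ℕ}
    {f : WithConv (B →ₗ[A] C)} (hf : IsOfDegree ℬ d f.ofConv) (h : IsGradedComul ℬ)
    (hε : IsOfDegree ℬ 0 (counit (R := A) (A := B))) (n : ℕ) :
    IsOfDegree ℬ (n * d) (f ^ n).ofConv := by
  induction n with
  | zero => simpa using isOfDegree_convOne hε
  | succ n ih => simpa [pow_succ, add_one_mul] using ih.convMul h hf

lemma proj_zero_eq_algebraMap_counit (hconn : ℬ 0 = LinearMap.range (Algebra.linearMap A B))
    (hε : IsOfDegree ℬ 0 (counit (R := A) (A := B))) (x : B) :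
    GradedAlgebra.proj ℬ 0 x = algebraMap A B (counit x) := by
  obtain ⟨c, hc⟩ : GradedAlgebra.proj ℬ 0 x ∈ LinearMap.range (Algebra.linearMap A B) := by
    exact hconn ▸ proj_mem ℬ 0 x
  rw [← hε.comp_proj, LinearMap.comp_apply, ← hc]
  simp

lemma IsOfDegree.leibniz {C : Type*} [Semiring C] [Algebra A C] {f : B →ₗ[A] C}
    (hf : IsOfDegree ℬ 1 f) (hconn : ℬ 0 = LinearMap.range (Algebra.linearMap A B))
    (hε : IsOfDegree ℬ 0 (counit (R := A) (A := B))) (x y : B) :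
    f (x * y) = f x * algebraMap A C (counit y) + algebraMap A C (counit x) * f y := by
  have hproj : GradedAlgebra.proj ℬ 1 (x * y) =
      GradedAlgebra.proj ℬ 0 x * GradedAlgebra.proj ℬ 1 y +
        GradedAlgebra.proj ℬ 1 x * GradedAlgebra.proj ℬ 0 y := by
    simp only [GradedAlgebra.proj_apply, DirectSum.decompose_mul,
      DirectSum.coe_mul_apply_eq_sum_antidiagonal, Nat.sum_antidiagonal_succ,
      Nat.antidiagonal_zero, sum_singleton]
  rw [← hf.comp_proj, LinearMap.comp_apply, hproj, proj_zero_eq_algebraMap_counit hconn hε,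
    proj_zero_eq_algebraMap_counit hconn hε, ← Algebra.commutes, ← Algebra.smul_def,
    ← Algebra.smul_def, map_add, map_smul, map_smul, Algebra.smul_def, Algebra.smul_def,
    ← Algebra.commutes (counit y), add_comm]
  simp only [← LinearMap.comp_apply, hf.comp_proj]

lemma mem_adjoin_degree_one_of_mem [Algebra ℚ A]
    (hconn : ℬ 0 = LinearMap.range (Algebra.linearMap A B)) (h : IsBinomialComul ℬ) :
    ∀ (i : ℕ), ∀ b ∈ ℬ i, b ∈ Algebra.adjoin A (ℬ 1 : Set B) := by
  intro i
  induction i using Nat.strong_induction_on with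
  | _ i ih =>
    rcases i with _ | n
    · intro b hb
      obtain ⟨c, rfl⟩ := hconn ▸ hb
      exact (Algebra.adjoin A _).algebraMap_mem c
    · intro b hb
      have hmul (t : B ⊗[A] B) : LinearMap.mul' A B
          (TensorProduct.map (GradedAlgebra.proj ℬ 1) (GradedAlgebra.proj ℬ n) t) ∈
            Algebra.adjoin A (ℬ 1 : Set B) := by
        induction t using TensorProduct.induction_on with
        | zero => simp
        | tmul x y =>
          exact mul_mem (Algebra.subset_adjoin (proj_mem ℬ 1 x))
            (ih n n.lt_succ_self _ (proj_mem ℬ n y))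
        | add s t hs ht => simpa only [map_add] using add_mem hs ht
      have := hmul (comul b)
      rw [h _ b hb 1 n (add_comm 1 n), Nat.choose_one_right] at this
      exact (Algebra.adjoin A _).toSubmodule.mem_of_nsmul_mem n.succ_ne_zero this

lemma adjoin_degree_one_eq_top [Algebra ℚ A]
    (hconn : ℬ 0 = LinearMap.range (Algebra.linearMap A B)) (h : IsBinomialComul ℬ) :
    Algebra.adjoin A (ℬ 1 : Set B) = ⊤ := by
  refine Algebra.eq_top_iff.mpr fun x => ?_
  induction x using DirectSum.Decomposition.inductionOn ℬ with
  | zero => exact zero_mem _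
  | @homogeneous i x => exact mem_adjoin_degree_one_of_mem hconn h i x x.2
  | add x y hx hy => exact add_mem hx hy

section Lift

variable {C : Type*} [CommSemiring C] [Algebra A C]

lemma convPow_add_apply_mul_of_mem (h₁ : IsGradedComul ℬ)
    (hconn : ℬ 0 = LinearMap.range (Algebra.linearMap A B))
    (hε : IsOfDegree ℬ 0 (counit (R := A) (A := B))) {δ : WithConv (B →ₗ[A] C)}
    (hδ : IsOfDegree ℬ 1 δ.ofConv) {a b : ℕ} {x y : B} (hx : x ∈ ℬ a) :
    (δ ^ (a + b)) (x * y) = (a + b).choose a • ((δ ^ a) x * (δ ^ b) y) := by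
  rw [LinearMap.convPow_apply_mul δ (hδ.leibniz hconn hε),
    sum_eq_single_of_mem (a, b) (HasAntidiagonal.mem_antidiagonal.mpr rfl)]
  rintro ⟨k, l⟩ hkl hne
  have hka : k ≠ a := by
    rintro rfl
    simp_all [HasAntidiagonal.mem_antidiagonal]
  rw [(hδ.convPow h₁ hε k) a (by simpa using hka.symm) x hx, zero_mul, smul_zero]

variable [Algebra ℚ A]

variable (ℬ) in
noncomputable def dividedPower (δ : WithConv (B →ₗ[A] C)) (n : ℕ) : ℬ n →ₗ[A] C :=
  algebraMap ℚ A (n ! : ℚ)⁻¹ • ((δ ^ n).ofConv ∘ₗ (ℬ n).subtype)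

lemma dividedPower_mul (h₁ : IsGradedComul ℬ)
    (hconn : ℬ 0 = LinearMap.range (Algebra.linearMap A B))
    (hε : IsOfDegree ℬ 0 (counit (R := A) (A := B))) {δ : WithConv (B →ₗ[A] C)}
    (hδ : IsOfDegree ℬ 1 δ.ofConv) {a b : ℕ} (x : ℬ a) (y : ℬ b) :
    dividedPower ℬ δ (a + b) (@GradedMonoid.GMul.mul ℕ (fun i => ℬ i) _ _ _ _ x y) =
      dividedPower ℬ δ a x * dividedPower ℬ δ b y := by
  simp only [dividedPower, LinearMap.smul_apply, LinearMap.comp_apply, Submodule.subtype_apply,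
    SetLike.coe_gMul, convPow_add_apply_mul_of_mem h₁ hconn hε hδ x.2]
  rw [smul_mul_smul_comm, ← map_mul, ← Nat.factorial_inv_mul_choose, map_mul, mul_smul,
    map_natCast, Nat.cast_smul_eq_nsmul]

noncomputable def liftOfDegreeOne (h₁ : IsGradedComul ℬ)
    (hconn : ℬ 0 = LinearMap.range (Algebra.linearMap A B))
    (hε : IsOfDegree ℬ 0 (counit (R := A) (A := B))) (δ : WithConv (B →ₗ[A] C))
    (hδ : IsOfDegree ℬ 1 δ.ofConv) : B →ₐ[A] C :=
  (DirectSum.toAlgebra A (fun i => ℬ i) (dividedPower ℬ δ) (by simp [dividedPower])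
    (dividedPower_mul h₁ hconn hε hδ)).comp (DirectSum.decomposeAlgEquiv ℬ).toAlgHom

lemma liftOfDegreeOne_apply_of_mem (h₁ : IsGradedComul ℬ)
    (hconn : ℬ 0 = LinearMap.range (Algebra.linearMap A B))
    (hε : IsOfDegree ℬ 0 (counit (R := A) (A := B))) (δ : WithConv (B →ₗ[A] C))
    (hδ : IsOfDegree ℬ 1 δ.ofConv) {x : B} (hx : x ∈ ℬ 1) :
    liftOfDegreeOne h₁ hconn hε δ hδ x = δ x := by
  simp [liftOfDegreeOne, DirectSum.decompose_of_mem ℬ hx, dividedPower]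

end Lift

end GradedBialgebra

theorem gaModule_is_symmetric_algebra_general
    {A : Type u} {B : Type v} [CommRing A] [Algebra ℚ A] [CommRing B] [HopfAlgebra A B]
    (ℬ : ℕ → Submodule A B) [GradedAlgebra ℬ]
    (hconn : ℬ 0 = LinearMap.range (Algebra.linearMap A B))
    (hcomul : ∀ (i : ℕ) (b : B), b ∈ ℬ i → ∀ j k : ℕ, j + k ≠ i →
      TensorProduct.map (GradedAlgebra.proj ℬ j) (GradedAlgebra.proj ℬ k)
        (Coalgebra.comul (R := A) b) = 0)
    (hGa : ∀ (i : ℕ) (b : B), b ∈ ℬ i → ∀ j k : ℕ, j + k = i →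
      LinearMap.mul' A B
        (TensorProduct.map (GradedAlgebra.proj ℬ j) (GradedAlgebra.proj ℬ k)
          (Coalgebra.comul (R := A) b)) = (i.choose j) • b) :
    ∀ (C : Type w) [CommRing C] [Algebra A C],
      Function.Bijective
        (fun f : B →ₐ[A] C => (f.toLinearMap ∘ₗ (ℬ 1).subtype : ℬ 1 →ₗ[A] C)) := by
  intro C _ _
  have hε := GradedBialgebra.isOfDegree_counit hcomul hGa
  constructor
  · intro f₁ f₂ h
    exact AlgHom.ext_of_adjoin_eq_top (GradedBialgebra.adjoin_degree_one_eq_top hconn hGa)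
      fun x hx => LinearMap.congr_fun h ⟨x, hx⟩
  · intro g
    obtain ⟨δ, hδ, hδg⟩ := GradedBialgebra.exists_isOfDegree_extend ℬ 1 g
    refine ⟨GradedBialgebra.liftOfDegreeOne hcomul hconn hε (toConv δ) hδ,
      LinearMap.ext fun x => ?_⟩
    exact (GradedBialgebra.liftOfDegreeOne_apply_of_mem hcomul hconn hε _ hδ x.2).trans (hδg x)

/-- Let `A` be a `ℚ`-algebra and `X = Spec B` a `G_a`-module scheme over
`A`.  Such a structure makes `B` a connected nonnegatively graded commutative Hopf
algebra over `A` whose comultiplication respects the grading and satisfies the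
`G_a`-module identity (the `(j,k)`-bidegree component of `comul b` multiplies out to
`binom(i,j) • b` for homogeneous `b` of degree `i = j + k`).  Then `X ≅ Spec (Sym_A M)`
as `G_a`-modules, with `M = B₁` the degree-one part: we express this by saying that
restriction to `B₁` identifies `A`-algebra maps out of `B` with `A`-linear maps out of
`B₁`, i.e. `B` is the symmetric algebra on `B₁`. -/
theorem gaModule_is_symmetric_algebra
    {A : Type u} {B : Type v} [CommRing A] [Algebra ℚ A] [CommRing B] [HopfAlgebra A B]
    (ℬ : ℕ → Submodule A B) [GradedAlgebra ℬ]
    (hconn : ℬ 0 = LinearMap.range (Algebra.linearMap A B))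
    (hinj : Function.Injective (algebraMap A B))
    (hcomul : ∀ (i : ℕ) (b : B), b ∈ ℬ i → ∀ j k : ℕ, j + k ≠ i →
      TensorProduct.map (GradedAlgebra.proj ℬ j) (GradedAlgebra.proj ℬ k)
        (Coalgebra.comul (R := A) b) = 0)
    (hGa : ∀ (i : ℕ) (b : B), b ∈ ℬ i → ∀ j k : ℕ, j + k = i →
      LinearMap.mul' A B
        (TensorProduct.map (GradedAlgebra.proj ℬ j) (GradedAlgebra.proj ℬ k)
          (Coalgebra.comul (R := A) b)) = (i.choose j) • b) :
    ∀ (C : Type w) [CommRing C] [Algebra A C],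
      Function.Bijective
        (fun f : B →ₐ[A] C => (f.toLinearMap ∘ₗ (ℬ 1).subtype : ℬ 1 →ₗ[A] C)) :=
  gaModule_is_symmetric_algebra_general ℬ hconn hcomul hGa
end
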